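/- For every k = 0, …, e−1 one has b₁^{(k)}·m₂^{(k)}(1) = b₂^{(k)}·m₁^{(k)}(2). -/

import Mathlib

/-!
Since `b_i^{(k)} · m_ĩ^{(k)}(i) = d_•^{(k)}(i)`, the claim is that `d_•^{(k)}(i)` does not
depend on `i`. Read the exponent pairs `(λ^{(k)}_{i,j}(i), λ^{(k)}_{ĩ,j}(i))` in `(ℚ/ℤ)²`.
There the passage from level `k` to level `k + 1` is the endomorphism given by the integer
matrix `[[b_i, T], [0, m_ĩ]]` with `T = r_i·d_•·λ_{i,1}`: it sends the `(j+1)`-st pair to the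
`j`-th pair of level `k + 1`, and its kernel is the cyclic group generated by the first pair,
of order `d_•^{(k)}(i)`. So the subgroup generated by the first `j + 1` pairs at level `k` has
`d_•^{(k)}(i)` times as many elements as the one generated by the first `j` pairs at level
`k + 1`. At `k = 0` both recursions see the same pairs up to swapping coordinates, and
induction on `k` shows that the orders of all these subgroups, in particular `d_•^{(k)}(i)`
for `j = 1`, do not depend on `i`.
-/

/-- The data of a reduced irreducible quasi-ordinary prototype surface branch
`ζ = Σ_{j=1}^e x₁^{λ_{1,j}} x₂^{λ_{2,j}}` together with, for each choice `i ∈ {1,2}`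
of the recursion, the derived exponent sequences `λ^{(k)}_{u,j}(i)`, the lowest-terms
representations `λ^{(k)}_{u,1}(i) = n_u^{(k)}(i) / m_u^{(k)}(i)` of the leading
exponents, and the minimal nonnegative integers `r_i^{(k)}, s_i^{(k)}` with
`m_ĩ^{(k)}(i)·s_i^{(k)} − n_ĩ^{(k)}(i)·r_i^{(k)} = 1`.

The `Bool` index `false` corresponds to the index `1` of the paper and `true` to `2`;
for an index `i`, the other index `ĩ` is `!i`. -/
structure QOData where
  /-- the number `e ≥ 1` of characteristic terms -/
  e : ℕ
  he : 1 ≤ e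
  /-- the characteristic exponents `λ_{u,j}` for `u ∈ {1,2}`, `j = 1,…,e` -/
  lam0 : Bool → ℕ → ℚ
  /-- the derived exponents `λ^{(k)}_{u,j}(i)`; the arguments are, in order, `i u k j`,
  with `k = 0,…,e−1` and `j = 1,…,e−k` -/
  lam : Bool → Bool → ℕ → ℕ → ℚ
  /-- the numerators `n_u^{(k)}(i)`; the arguments are, in order, `i u k` -/
  n : Bool → Bool → ℕ → ℤ
  /-- the denominators `m_u^{(k)}(i) ≥ 1`; the arguments are, in order, `i u k` -/
  m : Bool → Bool → ℕ → ℕ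
  /-- `r_i^{(k)}`; the arguments are, in order, `i k` -/
  r : Bool → ℕ → ℕ
  /-- `s_i^{(k)}`; the arguments are, in order, `i k` -/
  s : Bool → ℕ → ℕ
  /-- the leading exponents are positive -/
  pos : ∀ u, 0 < lam0 u 1
  /-- the exponents are nondecreasing in `j` -/
  mono : ∀ u j, 1 ≤ j → j < e → lam0 u j ≤ lam0 u (j + 1)
  /-- each characteristic pair is essential: it does not lie in the subgroup of `ℚ²`
  generated by `ℤ²` together with the earlier pairs -/
  essential : ∀ j, 1 ≤ j → j ≤ e →
    (lam0 false j, lam0 true j) ∉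
      AddSubgroup.closure
        ((Set.range fun p : ℤ × ℤ => ((p.1 : ℚ), (p.2 : ℚ))) ∪
          {q : ℚ × ℚ | ∃ l, 1 ≤ l ∧ l < j ∧ q = (lam0 false l, lam0 true l)})
  /-- `λ^{(0)}_{u,j}(i) = λ_{u,j}` -/
  base : ∀ i u j, lam i u 0 j = lam0 u j
  /-- the denominators are at least 1 -/
  m_pos : ∀ i u k, k ≤ e - 1 → 1 ≤ m i u k
  /-- the leading exponents are written in lowest terms -/
  cop : ∀ i u k, k ≤ e - 1 → Int.gcd (n i u k) (m i u k : ℤ) = 1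
  /-- `λ^{(k)}_{u,1}(i) = n_u^{(k)}(i) / m_u^{(k)}(i)` -/
  lead : ∀ i u k, k ≤ e - 1 → lam i u k 1 = (n i u k : ℚ) / (m i u k : ℚ)
  /-- `m_ĩ^{(k)}(i)·s_i^{(k)} − n_ĩ^{(k)}(i)·r_i^{(k)} = 1` -/
  rs_det : ∀ i k, k ≤ e - 1 →
    (m i (!i) k : ℤ) * (s i k : ℤ) - n i (!i) k * (r i k : ℤ) = 1
  /-- `r_i^{(k)}` and `s_i^{(k)}` are the smallest nonnegative integers satisfying
  the determinant condition -/
  rs_min : ∀ i k, k ≤ e - 1 → ∀ r' s' : ℕ,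
    (m i (!i) k : ℤ) * (s' : ℤ) - n i (!i) k * (r' : ℤ) = 1 → r i k ≤ r' ∧ s i k ≤ s'
  /-- the recursion for `λ^{(k+1)}_{ĩ,j}(i)`, where `d_•^{(k)}(i) = lcm(m₁^{(k)}(i), m₂^{(k)}(i))` -/
  rec_other : ∀ i k j, k + 1 ≤ e - 1 → 1 ≤ j → j ≤ e - (k + 1) →
    lam i (!i) (k + 1) j =
      (m i (!i) k : ℚ) *
        (lam i (!i) k (j + 1) - lam i (!i) k 1 +
          (Nat.lcm (m i false k) (m i true k) : ℚ) * lam i (!i) k 1)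
  /-- the recursion for `λ^{(k+1)}_{i,j}(i)`, where
  `b_i^{(k)} = d_•^{(k)}(i) / m_ĩ^{(k)}(i)` -/
  rec_self : ∀ i k j, k + 1 ≤ e - 1 → 1 ≤ j → j ≤ e - (k + 1) →
    lam i i (k + 1) j =
      ((Nat.lcm (m i false k) (m i true k) / m i (!i) k : ℕ) : ℚ) *
        (lam i i k (j + 1) - lam i i k 1 +
          (Nat.lcm (m i false k) (m i true k) : ℚ) * lam i i k 1) +
      ((Nat.lcm (m i false k) (m i true k) / m i (!i) k : ℕ) : ℚ) * (r i k : ℚ) *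
        lam i i k 1 * lam i (!i) (k + 1) j

namespace QOData

variable (D : QOData)

/-- `d_•^{(k)}(i) = lcm(m₁^{(k)}(i), m₂^{(k)}(i))` -/
def dd (i : Bool) (k : ℕ) : ℕ := Nat.lcm (D.m i false k) (D.m i true k)

/-- `b_i^{(k)} = d_•^{(k)}(i) / m_ĩ^{(k)}(i)` -/
def b (i : Bool) (k : ℕ) : ℕ := D.dd i k / D.m i (!i) k

/-- `c_•^{(k)}(i) = gcd(n₁^{(k)}(i), n₂^{(k)}(i))` -/
def c (i : Bool) (k : ℕ) : ℕ := Int.gcd (D.n i false k) (D.n i true k)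

/-- `d^{(k)}(i) = ∏_{l=k}^{e−1} d_•^{(l)}(i)`, the degree of the `k`-th derived surface -/
def dTot (i : Bool) (k : ℕ) : ℕ := ∏ l ∈ Finset.Ico k D.e, D.dd i l

end QOData

local notation "ℚ⧸ℤ" => AddCircle (1 : ℚ)

theorem AddMonoidHom.card_ker_mul_card_map {G G' : Type*} [AddGroup G] [AddGroup G']
    (f : G →+ G') {K : AddSubgroup G} (h : f.ker ≤ K) :
    Nat.card f.ker * Nat.card (K.map f) = Nat.card K := by
  rw [← AddSubgroup.relIndex_ker, ← AddSubgroup.relIndex_bot_left,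
    ← AddSubgroup.relIndex_bot_left, AddSubgroup.relIndex_mul_relIndex _ _ _ bot_le h]

namespace AddCircle

theorem coe_eq_zero_of_eq_intCast {a : ℚ} (z : ℤ) (h : a = z) : (a : ℚ⧸ℤ) = 0 :=
  (coe_eq_zero_iff (1 : ℚ)).2 ⟨z, by simp [h]⟩

theorem coe_eq_coe_of_eq_add_intCast {a b : ℚ} (z : ℤ) (h : a = b + z) : (a : ℚ⧸ℤ) = b := by
  rw [← sub_eq_zero, ← coe_sub]
  exact coe_eq_zero_of_eq_intCast z (by rw [h]; ring)

theorem addOrderOf_coe_eq_den (q : ℚ) : addOrderOf (q : ℚ⧸ℤ) = q.den := by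
  simpa using addOrderOf_coe_rat (p := (1 : ℚ)) (q := q)

theorem mem_zmultiples_of_addOrderOf_nsmul_eq_zero {y z : ℚ⧸ℤ}
    (h : addOrderOf z • y = 0) : y ∈ AddSubgroup.zmultiples z := by
  induction z using QuotientAddGroup.induction_on with | H q => ?_
  induction y using QuotientAddGroup.induction_on with | H x => ?_
  rw [addOrderOf_coe_eq_den, ← coe_nsmul, coe_eq_zero_iff] at h
  obtain ⟨C, hC⟩ := h
  obtain ⟨u, v, huv⟩ := q.isCoprime_num_den
  refine ⟨C * u, ?_⟩
  show (C * u) • ((q : ℚ) : ℚ⧸ℤ) = (x : ℚ⧸ℤ)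
  rw [← coe_zsmul]
  apply coe_eq_coe_of_eq_add_intCast (-(C * v))
  have hq : (q.den : ℚ) * q = q.num := by rw [mul_comm]; exact Rat.mul_den_eq_num q
  have hx : (C : ℚ) = q.den * x := by simpa using hC
  have huv' : (u : ℚ) * q.num + (v : ℚ) * q.den = 1 := by exact_mod_cast huv
  apply mul_left_cancel₀ (show (q.den : ℚ) ≠ 0 by positivity)
  simp only [zsmul_eq_mul]
  push_cast
  linear_combination (C * u : ℚ) * hq + hx + (C : ℚ) * huv'

end AddCircle

namespace QOData

variable (D : QOData) {i : Bool} {k : ℕ}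

theorem m_dvd_dd (i u : Bool) (k : ℕ) : D.m i u k ∣ D.dd i k := by
  cases u
  · exact Nat.dvd_lcm_left _ _
  · exact Nat.dvd_lcm_right _ _

theorem dd_pos (hk : k ≤ D.e - 1) : 0 < D.dd i k :=
  Nat.lcm_pos (D.m_pos i false k hk) (D.m_pos i true k hk)

theorem b_mul_m (i : Bool) (k : ℕ) : D.b i k * D.m i (!i) k = D.dd i k :=
  Nat.div_mul_cancel (D.m_dvd_dd i (!i) k)

theorem lcm_m_self_m_other (i : Bool) (k : ℕ) :
    Nat.lcm (D.m i i k) (D.m i (!i) k) = D.dd i k := by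
  cases i
  · rfl
  · exact Nat.lcm_comm _ _

theorem b_eq_div_gcd (hk : k ≤ D.e - 1) :
    D.b i k = D.m i i k / Nat.gcd (D.m i i k) (D.m i (!i) k) := by
  have hm := D.m_pos i (!i) k hk
  refine Nat.eq_div_of_mul_eq_left (Nat.gcd_pos_of_pos_right _ hm).ne' ?_
  refine Nat.eq_of_mul_eq_mul_right hm ?_
  rw [mul_right_comm, D.b_mul_m, ← D.lcm_m_self_m_other, mul_comm, Nat.gcd_mul_lcm]

theorem lam_one_den (u : Bool) (hk : k ≤ D.e - 1) : (D.lam i u k 1).den = D.m i u k := by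
  have h := Rat.den_div_eq_of_coprime (a := D.n i u k) (b := D.m i u k)
    (by exact_mod_cast D.m_pos i u k hk) (D.cop i u k hk)
  rw [D.lead i u k hk]
  exact_mod_cast h

theorem m_mul_lam_one (u : Bool) (hk : k ≤ D.e - 1) :
    (D.m i u k : ℚ) * D.lam i u k 1 = D.n i u k := by
  have := D.m_pos i u k hk
  rw [D.lead i u k hk]
  field_simp

theorem dd_mul_lam_one (u : Bool) (hk : k ≤ D.e - 1) :
    (D.dd i k : ℚ) * D.lam i u k 1 = ((D.dd i k / D.m i u k : ℕ) * D.n i u k : ℤ) := by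
  rw [Int.cast_mul, Int.cast_natCast, ← D.m_mul_lam_one u hk, ← mul_assoc, ← Nat.cast_mul,
    Nat.div_mul_cancel (D.m_dvd_dd i u k)]

theorem m_nsmul_coe_lam_one (u : Bool) (hk : k ≤ D.e - 1) :
    D.m i u k • (D.lam i u k 1 : ℚ⧸ℤ) = 0 := by
  rw [← D.lam_one_den u hk, ← AddCircle.addOrderOf_coe_eq_den]
  exact addOrderOf_nsmul_eq_zero _

theorem addOrderOf_m_nsmul_coe_lam_one (hk : k ≤ D.e - 1) :
    addOrderOf (D.m i (!i) k • (D.lam i i k 1 : ℚ⧸ℤ)) = D.b i k := by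
  rw [addOrderOf_nsmul' _ (Nat.one_le_iff_ne_zero.1 (D.m_pos i (!i) k hk)),
    AddCircle.addOrderOf_coe_eq_den, D.lam_one_den i hk, D.b_eq_div_gcd hk]

def exponentClass (i : Bool) (k j : ℕ) : ℚ⧸ℤ × ℚ⧸ℤ :=
  ((D.lam i i k j : ℚ⧸ℤ), (D.lam i (!i) k j : ℚ⧸ℤ))

def exponentGroup (i : Bool) (k j : ℕ) : AddSubgroup (ℚ⧸ℤ × ℚ⧸ℤ) :=
  AddSubgroup.closure (D.exponentClass i k '' Set.Icc 1 j)

def shear (i : Bool) (k : ℕ) : ℤ := D.r i k * ((D.dd i k / D.m i i k : ℕ) * D.n i i k)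

def reduction (i : Bool) (k : ℕ) : (ℚ⧸ℤ × ℚ⧸ℤ) →+ (ℚ⧸ℤ × ℚ⧸ℤ) :=
  AddMonoidHom.prod (D.b i k • AddMonoidHom.fst _ _ + D.shear i k • AddMonoidHom.snd _ _)
    (D.m i (!i) k • AddMonoidHom.snd _ _)

theorem reduction_apply (x : ℚ⧸ℤ × ℚ⧸ℤ) :
    D.reduction i k x = (D.b i k • x.1 + D.shear i k • x.2, D.m i (!i) k • x.2) := rfl

theorem shear_eq (hk : k ≤ D.e - 1) :
    (D.shear i k : ℚ) = D.r i k * (D.dd i k * D.lam i i k 1) := by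
  rw [D.dd_mul_lam_one i hk, shear, Int.cast_mul, Int.cast_natCast]

theorem addOrderOf_exponentClass_one (hk : k ≤ D.e - 1) :
    addOrderOf (D.exponentClass i k 1) = D.dd i k := by
  rw [exponentClass, Prod.addOrderOf_mk, AddCircle.addOrderOf_coe_eq_den,
    AddCircle.addOrderOf_coe_eq_den, D.lam_one_den i hk, D.lam_one_den (!i) hk,
    lcm_m_self_m_other]

theorem reduction_exponentClass_one (hk : k ≤ D.e - 1) :
    D.reduction i k (D.exponentClass i k 1) = 0 := by
  have hb : (D.b i k : ℚ) * D.m i (!i) k = D.dd i k := by exact_mod_cast D.b_mul_m i k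
  have hrs : (D.m i (!i) k : ℚ) * D.s i k - D.n i (!i) k * D.r i k = 1 := by
    exact_mod_cast D.rs_det i k hk
  have hn := D.m_mul_lam_one (i := i) (!i) hk
  have hd := D.dd_mul_lam_one (i := i) i hk
  rw [reduction_apply, exponentClass, Prod.mk_eq_zero]
  refine ⟨?_, D.m_nsmul_coe_lam_one (!i) hk⟩
  rw [← AddCircle.coe_nsmul, ← AddCircle.coe_zsmul, ← AddCircle.coe_add, nsmul_eq_mul,
    zsmul_eq_mul, D.shear_eq hk]
  refine AddCircle.coe_eq_zero_of_eq_intCast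
    (D.s i k * ((D.dd i k / D.m i i k : ℕ) * D.n i i k)) ?_
  rw [Int.cast_mul, ← hd, Int.cast_natCast]
  linear_combination (D.s i k * D.lam i i k 1 - D.r i k * D.lam i i k 1 * D.lam i (!i) k 1) * hb
    + (D.r i k * D.b i k * D.lam i i k 1) * hn - (D.b i k * D.lam i i k 1) * hrs

theorem reduction_exponentClass_succ {j : ℕ} (hk : k + 1 ≤ D.e - 1) (hj : 1 ≤ j)
    (hje : j ≤ D.e - (k + 1)) :
    D.reduction i k (D.exponentClass i k (j + 1)) = D.exponentClass i (k + 1) j := by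
  have hk' : k ≤ D.e - 1 := by omega
  have hb : (D.b i k : ℚ) * D.m i (!i) k = D.dd i k := by exact_mod_cast D.b_mul_m i k
  have hrs : (D.m i (!i) k : ℚ) * D.s i k - D.n i (!i) k * D.r i k = 1 := by
    exact_mod_cast D.rs_det i k hk'
  have hn := D.m_mul_lam_one (i := i) (!i) hk'
  have hd := D.dd_mul_lam_one (i := i) i hk'
  have hother : D.lam i (!i) (k + 1) j =
      D.m i (!i) k * D.lam i (!i) k (j + 1) + ((D.dd i k - 1) * D.n i (!i) k : ℤ) := by
    have hrec : D.lam i (!i) (k + 1) j = D.m i (!i) k *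
        (D.lam i (!i) k (j + 1) - D.lam i (!i) k 1 + D.dd i k * D.lam i (!i) k 1) :=
      D.rec_other i k j hk hj hje
    push_cast
    linear_combination hrec + (D.dd i k - 1 : ℚ) * hn
  have hself : D.lam i i (k + 1) j = D.b i k * (D.lam i i k (j + 1) - D.lam i i k 1 +
      D.dd i k * D.lam i i k 1) + D.b i k * D.r i k * D.lam i i k 1 * D.lam i (!i) (k + 1) j :=
    D.rec_self i k j hk hj hje
  rw [reduction_apply, exponentClass, exponentClass, Prod.mk.injEq, ← AddCircle.coe_nsmul,
    ← AddCircle.coe_zsmul, ← AddCircle.coe_add, ← AddCircle.coe_nsmul, nsmul_eq_mul,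
    nsmul_eq_mul, zsmul_eq_mul, D.shear_eq hk']
  constructor
  · refine (AddCircle.coe_eq_coe_of_eq_add_intCast
      ((D.dd i k - 1) * D.s i k * ((D.dd i k / D.m i i k : ℕ) * D.n i i k)) ?_).symm
    rw [Int.cast_mul, ← hd, hself, hother]
    push_cast
    linear_combination
      (D.r i k * D.lam i i k 1 * D.lam i (!i) k (j + 1)
        + (D.dd i k - 1) * D.s i k * D.lam i i k 1) * hb
      - ((D.dd i k - 1) * D.b i k * D.lam i i k 1) * hrs
  · exact (AddCircle.coe_eq_coe_of_eq_add_intCast _ hother).symm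

theorem ker_reduction (hk : k ≤ D.e - 1) :
    (D.reduction i k).ker = AddSubgroup.zmultiples (D.exponentClass i k 1) := by
  refine le_antisymm (fun x hx => ?_)
    (AddSubgroup.zmultiples_le.2 (D.reduction_exponentClass_one hk))
  obtain ⟨c, hc⟩ : x.2 ∈ AddSubgroup.zmultiples (D.lam i (!i) k 1 : ℚ⧸ℤ) := by
    refine AddCircle.mem_zmultiples_of_addOrderOf_nsmul_eq_zero ?_
    rw [AddCircle.addOrderOf_coe_eq_den, D.lam_one_den (!i) hk]
    exact congrArg Prod.snd (AddMonoidHom.mem_ker.1 hx)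
  suffices hy : x - c • D.exponentClass i k 1 ∈
      AddSubgroup.zmultiples (D.exponentClass i k 1) by
    simpa using add_mem hy (zsmul_mem (AddSubgroup.mem_zmultiples _) c)
  have hyker := sub_mem hx (zsmul_mem (D.reduction_exponentClass_one hk) c)
  have hy₂ : (x - c • D.exponentClass i k 1).2 = 0 := by simp [exponentClass, hc]
  generalize x - c • D.exponentClass i k 1 = y at hyker hy₂ ⊢
  obtain ⟨y₁, y₂⟩ := y
  subst hy₂
  rw [AddMonoidHom.mem_ker, reduction_apply, Prod.mk_eq_zero] at hyker
  obtain ⟨t, rfl⟩ : y₁ ∈ AddSubgroup.zmultiples (D.m i (!i) k • (D.lam i i k 1 : ℚ⧸ℤ)) := by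
    refine AddCircle.mem_zmultiples_of_addOrderOf_nsmul_eq_zero ?_
    simpa [D.addOrderOf_m_nsmul_coe_lam_one hk] using hyker.1
  refine ⟨t * D.m i (!i) k, ?_⟩
  simp [exponentClass, mul_zsmul, D.m_nsmul_coe_lam_one (!i) hk]

theorem exponentGroup_one :
    D.exponentGroup i k 1 = AddSubgroup.zmultiples (D.exponentClass i k 1) := by
  rw [exponentGroup, Set.Icc_self, Set.image_singleton]
  exact (AddSubgroup.zmultiples_eq_closure _).symm

theorem card_exponentGroup_one (hk : k ≤ D.e - 1) :
    Nat.card (D.exponentGroup i k 1) = D.dd i k := by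
  rw [exponentGroup_one, Nat.card_zmultiples, D.addOrderOf_exponentClass_one hk]

theorem exponentGroup_succ_eq_map {j : ℕ} (hk : k + 1 ≤ D.e - 1) (hje : j ≤ D.e - (k + 1)) :
    D.exponentGroup i (k + 1) j = (D.exponentGroup i k (j + 1)).map (D.reduction i k) := by
  rw [exponentGroup, exponentGroup, AddMonoidHom.map_closure, ← Set.image_comp]
  apply le_antisymm <;> rw [AddSubgroup.closure_le] <;> rintro _ ⟨l, ⟨hl₁, hlj⟩, rfl⟩
  · rw [← D.reduction_exponentClass_succ hk hl₁ (hlj.trans hje)]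
    exact AddSubgroup.subset_closure ⟨l + 1, ⟨by omega, by omega⟩, rfl⟩
  · obtain rfl | hl := hl₁.eq_or_lt
    · rw [Function.comp_apply, D.reduction_exponentClass_one (by omega)]
      exact zero_mem _
    · obtain ⟨l, rfl⟩ : ∃ l', l = l' + 1 := ⟨l - 1, by omega⟩
      rw [Function.comp_apply, D.reduction_exponentClass_succ hk (by omega) (by omega)]
      exact AddSubgroup.subset_closure ⟨l, ⟨by omega, by omega⟩, rfl⟩

theorem card_exponentGroup_succ {j : ℕ} (hk : k + 1 ≤ D.e - 1) (hje : j ≤ D.e - (k + 1)) :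
    Nat.card (D.exponentGroup i k (j + 1)) =
      D.dd i k * Nat.card (D.exponentGroup i (k + 1) j) := by
  have hk' : k ≤ D.e - 1 := by omega
  have hker : (D.reduction i k).ker ≤ D.exponentGroup i k (j + 1) := by
    rw [D.ker_reduction hk', ← exponentGroup_one]
    exact AddSubgroup.closure_mono (Set.image_mono (Set.Icc_subset_Icc_right (by omega)))
  rw [D.exponentGroup_succ_eq_map hk hje, ← AddMonoidHom.card_ker_mul_card_map _ hker,
    D.ker_reduction hk', Nat.card_zmultiples, D.addOrderOf_exponentClass_one hk']

theorem card_exponentGroup_zero_false_eq_true (j : ℕ) :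
    Nat.card (D.exponentGroup false 0 j) = Nat.card (D.exponentGroup true 0 j) := by
  let swap : ℚ⧸ℤ × ℚ⧸ℤ ≃+ ℚ⧸ℤ × ℚ⧸ℤ := AddEquiv.prodComm
  have hgen : D.exponentClass true 0 = swap ∘ D.exponentClass false 0 := by
    funext l
    simp [swap, exponentClass, D.base]
  have hmap :
      D.exponentGroup true 0 j = (D.exponentGroup false 0 j).map swap.toAddMonoidHom := by
    rw [exponentGroup, exponentGroup, AddMonoidHom.map_closure, ← Set.image_comp, hgen]
    rfl
  rw [hmap, AddSubgroup.card_map_of_injective swap.injective]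

theorem card_exponentGroup_false_eq_true (hk : k ≤ D.e - 1) {j : ℕ} (hje : j ≤ D.e - k) :
    Nat.card (D.exponentGroup false k j) = Nat.card (D.exponentGroup true k j) := by
  induction k generalizing j with
  | zero => exact D.card_exponentGroup_zero_false_eq_true j
  | succ k ih =>
    have hk' : k ≤ D.e - 1 := by omega
    have hdd : D.dd false k = D.dd true k := by
      rw [← D.card_exponentGroup_one hk', ← D.card_exponentGroup_one hk']
      exact ih hk' (by omega)
    refine Nat.eq_of_mul_eq_mul_left (D.dd_pos (i := false) hk') ?_
    rw [← D.card_exponentGroup_succ hk hje, ih hk' (by omega), D.card_exponentGroup_succ hk hje,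
      hdd]

theorem dd_false_eq_dd_true (hk : k ≤ D.e - 1) : D.dd false k = D.dd true k := by
  rw [← D.card_exponentGroup_one hk, ← D.card_exponentGroup_one hk]
  exact D.card_exponentGroup_false_eq_true hk (by have := D.he; omega)

end QOData

/-- For every `k = 0,…,e−1`: `b₁^{(k)}·m₂^{(k)}(1) = b₂^{(k)}·m₁^{(k)}(2)`. -/
theorem b_m_swap (D : QOData) (k : ℕ) (hk : k ≤ D.e - 1) :
    D.b false k * D.m false true k = D.b true k * D.m true false k :=
  (D.b_mul_m false k).trans ((D.dd_false_eq_dd_true hk).trans (D.b_mul_m true k).symm)
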